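/- Shearer-type inequality for mutual information: let U_1, …, U_m and V be random variables taking values in finite sets, defined on a common probability space, such that U_1, …, U_m are mutually independent, and write U = (U_1,…,U_m). Let k > 0 and let ν be a probability distribution on subsets S ⊆ [m] such that for every i ∈ [m], Σ_{S : i ∈ S} ν(S) ≤ 1/k. Then Σ_{S} ν(S) · I(U_S : V) ≤ I(U : V)/k, where U_S denotes the tuple (U_i)_{i∈S}. -/

import Mathlib

open Finset

/-- Distribution of the random variable `f` on a finite probability space `(Ω, p)`. -/
noncomputable def distOf {Ω T : Type} [Fintype Ω] [Fintype T] [DecidableEq T]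
    (p : Ω → ℝ) (f : Ω → T) : T → ℝ :=
  fun t => ∑ ω, if f ω = t then p ω else 0

/-- Shannon entropy (base-2) of a distribution on a finite set. -/
noncomputable def shannonEnt {T : Type} [Fintype T] (q : T → ℝ) : ℝ :=
  -∑ t, q t * Real.logb 2 (q t)

/-- Entropy `H(f)` of a random variable `f` on `(Ω, p)`. -/
noncomputable def Hrv {Ω T : Type} [Fintype Ω] [Fintype T] [DecidableEq T]
    (p : Ω → ℝ) (f : Ω → T) : ℝ :=
  shannonEnt (distOf p f)

/-- Mutual information `I(f : g) = H(f) + H(g) − H(f,g)` on `(Ω, p)`. -/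
noncomputable def mutInfo {Ω A B : Type} [Fintype Ω] [Fintype A] [DecidableEq A]
    [Fintype B] [DecidableEq B] (p : Ω → ℝ) (f : Ω → A) (g : Ω → B) : ℝ :=
  Hrv p f + Hrv p g - Hrv p (fun ω => (f ω, g ω))

/-!
By the chain rule, `I(U_S : V)` is the sum over `i ∈ S` of `I(U_i : V | U_{S,<i})`, where
`U_{S,<i} = (U_j)_{j ∈ S, j < i}`. Such a term equals `H(U_i | U_{S,<i}) - H(U_i | U_{S,<i}, V)`,
which is at most `H(U_i) - H(U_i | U_{<i}, V)` since conditioning reduces entropy. By independence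
`H(U_i) = H(U_i | U_{<i})`, so the bound is `I(U_i : V | U_{<i})`, and these bounds add up to
`I(U : V)`. Averaging over `S ∼ ν` counts each `i` with weight `∑_{S ∋ i} ν(S) ≤ 1/k`.
-/

lemma Finset.sum_insert_filter_lt_sub {ι M : Type} [LinearOrder ι] [AddCommGroup M]
    (g : Finset ι → M) (S : Finset ι) :
    ∑ i ∈ S, (g (insert i (S.filter (· < i))) - g (S.filter (· < i))) = g S - g ∅ := by
  induction S using Finset.induction_on_max with
  | empty => simp
  | insert a s hlt ih =>
    have ha : a ∉ s := fun h => lt_irrefl a (hlt a h)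
    have hfa : (insert a s).filter (· < a) = s := by
      rw [filter_insert, if_neg (lt_irrefl a), filter_true_of_mem hlt]
    have hfi : ∀ i ∈ s, (insert a s).filter (· < i) = s.filter (· < i) := fun i hi => by
      rw [filter_insert, if_neg (lt_asymm (hlt i hi))]
    rw [sum_insert ha, hfa, sum_congr rfl fun i hi => by rw [hfi i hi], ih]
    abel

section Entropy

variable {Ω : Type} [Fintype Ω] {p : Ω → ℝ} {A B C T : Type}
  [Fintype A] [DecidableEq A] [Fintype B] [DecidableEq B] [Fintype C] [DecidableEq C]
  [Fintype T] [DecidableEq T]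

lemma distOf_nonneg (hp0 : ∀ ω, 0 ≤ p ω) (f : Ω → T) (t : T) : 0 ≤ distOf p f t :=
  sum_nonneg fun ω _ => by split_ifs <;> simp [hp0 ω]

lemma le_distOf_apply (hp0 : ∀ ω, 0 ≤ p ω) (f : Ω → T) (ω : Ω) : p ω ≤ distOf p f (f ω) := by
  simpa [distOf] using single_le_sum (f := fun ω' => if f ω' = f ω then p ω' else 0)
    (fun ω' _ => by split_ifs <;> simp [hp0 ω']) (mem_univ ω)

lemma distOf_apply_pos (hp0 : ∀ ω, 0 ≤ p ω) (f : Ω → T) {ω : Ω} (hω : 0 < p ω) :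
    0 < distOf p f (f ω) :=
  hω.trans_le (le_distOf_apply hp0 f ω)

lemma sum_mul_comp_eq_sum_distOf (f : Ω → T) (G : T → ℝ) :
    ∑ ω, p ω * G (f ω) = ∑ t, distOf p f t * G t := by
  simp only [distOf, sum_mul, ite_mul, zero_mul]
  rw [sum_comm]
  simp

lemma sum_distOf (f : Ω → T) : ∑ t, distOf p f t = ∑ ω, p ω := by
  simpa using (sum_mul_comp_eq_sum_distOf (p := p) f fun _ => 1).symm

lemma sum_distOf_pair_left (f : Ω → A) (g : Ω → B) (b : B) :
    ∑ a, distOf p (fun ω => (f ω, g ω)) (a, b) = distOf p g b := by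
  simp only [distOf, Prod.ext_iff]
  rw [sum_comm]
  refine sum_congr rfl fun ω _ => ?_
  by_cases h : g ω = b <;> simp [h]

lemma sum_mul_eq_of_pos (hp0 : ∀ ω, 0 ≤ p ω) {a b : Ω → ℝ} (h : ∀ ω, 0 < p ω → a ω = b ω) :
    ∑ ω, p ω * a ω = ∑ ω, p ω * b ω :=
  sum_congr rfl fun ω _ => by
    rcases (hp0 ω).eq_or_lt with hω | hω
    · simp [← hω]
    · rw [h ω hω]

lemma Hrv_eq_neg_sum (f : Ω → T) :
    Hrv p f = -∑ ω, p ω * Real.logb 2 (distOf p f (f ω)) := by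
  rw [Hrv, shannonEnt, sum_mul_comp_eq_sum_distOf f fun t => Real.logb 2 (distOf p f t)]

lemma Hrv_congr {f : Ω → A} {g : Ω → B} (h : ∀ ω ω', f ω' = f ω ↔ g ω' = g ω) :
    Hrv p f = Hrv p g := by
  simp only [Hrv_eq_neg_sum, distOf, h]

lemma Hrv_const (hp1 : ∑ ω, p ω = 1) (c : T) : Hrv p (fun _ => c) = 0 := by
  simp [Hrv_eq_neg_sum, distOf, hp1]

lemma Hrv_of_subsingleton [Subsingleton T] (hp1 : ∑ ω, p ω = 1) (f : Ω → T) : Hrv p f = 0 :=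
  (Hrv_congr (g := fun _ => ()) fun _ _ => iff_of_true (Subsingleton.elim _ _) rfl).trans
    (Hrv_const hp1 ())

lemma sum_mul_div_distOf_le (hp0 : ∀ ω, 0 ≤ p ω) (F : Ω → T) {r : T → ℝ}
    (hr0 : ∀ t, 0 ≤ r t) : ∑ ω, p ω * (r (F ω) / distOf p F (F ω)) ≤ ∑ t, r t := by
  rw [sum_mul_comp_eq_sum_distOf F fun t => r t / distOf p F t]
  refine sum_le_sum fun t _ => ?_
  rcases (distOf_nonneg hp0 F t).eq_or_lt with h | h
  · simp [← h, hr0 t]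
  · rw [mul_div_cancel₀ _ h.ne']

lemma sum_mul_logb_nonpos (hp0 : ∀ ω, 0 ≤ p ω) (hp1 : ∑ ω, p ω = 1) {x : Ω → ℝ}
    (hx : ∀ ω, 0 < p ω → 0 < x ω) (hsum : ∑ ω, p ω * x ω ≤ 1) :
    ∑ ω, p ω * Real.logb 2 (x ω) ≤ 0 := by
  have hterm : ∀ ω, p ω * Real.logb 2 (x ω) ≤ (p ω * x ω - p ω) / Real.log 2 := fun ω => by
    rcases (hp0 ω).eq_or_lt with hω | hω
    · simp [← hω]
    · rw [Real.logb, mul_div_assoc', ← mul_sub_one]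
      gcongr
      exact Real.log_le_sub_one_of_pos (hx ω hω)
  calc ∑ ω, p ω * Real.logb 2 (x ω) ≤ ∑ ω, (p ω * x ω - p ω) / Real.log 2 :=
        sum_le_sum fun ω _ => hterm ω
    _ = (∑ ω, p ω * x ω - 1) / Real.log 2 := by rw [← sum_div, sum_sub_distrib, hp1]
    _ ≤ 0 := div_nonpos_of_nonpos_of_nonneg (by linarith) (Real.log_nonneg one_le_two)

lemma Hrv_le_neg_sum_mul_logb (hp0 : ∀ ω, 0 ≤ p ω) (hp1 : ∑ ω, p ω = 1) (F : Ω → T)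
    {r : T → ℝ} (hr0 : ∀ t, 0 ≤ r t) (hr1 : ∑ t, r t ≤ 1) (hpos : ∀ ω, 0 < p ω → 0 < r (F ω)) :
    Hrv p F ≤ -∑ ω, p ω * Real.logb 2 (r (F ω)) := by
  have hgibbs := sum_mul_logb_nonpos hp0 hp1
    (fun ω hω => div_pos (hpos ω hω) (distOf_apply_pos hp0 F hω))
    ((sum_mul_div_distOf_le hp0 F hr0).trans hr1)
  have hsplit : ∑ ω, p ω * Real.logb 2 (r (F ω) / distOf p F (F ω))
      = ∑ ω, p ω * Real.logb 2 (r (F ω)) + Hrv p F := by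
    rw [Hrv_eq_neg_sum, ← sub_eq_add_neg, ← sum_sub_distrib]
    simp_rw [← mul_sub]
    exact sum_mul_eq_of_pos hp0 fun ω hω =>
      Real.logb_div (hpos ω hω).ne' (distOf_apply_pos hp0 F hω).ne'
  linarith

lemma Hrv_submodular (hp0 : ∀ ω, 0 ≤ p ω) (hp1 : ∑ ω, p ω = 1)
    (f : Ω → A) (g : Ω → B) (h : Ω → C) :
    Hrv p (fun ω => (f ω, (g ω, h ω))) + Hrv p h
      ≤ Hrv p (fun ω => (f ω, h ω)) + Hrv p (fun ω => (g ω, h ω)) := by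
  set qfh := distOf p (fun ω => (f ω, h ω))
  set qgh := distOf p (fun ω => (g ω, h ω))
  set qh := distOf p h
  -- `r` is the law of `(f, g, h)` that makes `f` and `g` conditionally independent given `h`
  set r : A × (B × C) → ℝ := fun v => qfh (v.1, v.2.2) * qgh v.2 / qh v.2.2
  have hr0 : ∀ v, 0 ≤ r v := fun v =>
    div_nonneg (mul_nonneg (distOf_nonneg hp0 _ _) (distOf_nonneg hp0 _ _))
      (distOf_nonneg hp0 _ _)
  have hr1 : ∑ v, r v ≤ 1 := by
    have hmarg : ∀ w : B × C, ∑ a, r (a, w) = qh w.2 * qgh w / qh w.2 := fun w => by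
      simp only [r, ← sum_div, ← sum_mul, qfh, qh, sum_distOf_pair_left]
    calc ∑ v, r v = ∑ w : B × C, qh w.2 * qgh w / qh w.2 := by
          rw [Fintype.sum_prod_type, sum_comm]
          exact sum_congr rfl fun w _ => hmarg w
      _ ≤ ∑ w, qgh w := sum_le_sum fun w _ => by
          rcases (distOf_nonneg hp0 h w.2).eq_or_lt with hw | hw
          · simpa [qh, ← hw] using distOf_nonneg hp0 _ w
          · rw [mul_div_cancel_left₀ _ hw.ne']
      _ = 1 := by rw [sum_distOf, hp1]
  have hpos : ∀ ω, 0 < p ω → 0 < r (f ω, (g ω, h ω)) := fun ω hω =>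
    div_pos (mul_pos (distOf_apply_pos hp0 _ hω) (distOf_apply_pos hp0 _ hω))
      (distOf_apply_pos hp0 h hω)
  have hcross : ∑ ω, p ω * Real.logb 2 (r (f ω, (g ω, h ω)))
      = ∑ ω, p ω * Real.logb 2 (qfh (f ω, h ω)) + ∑ ω, p ω * Real.logb 2 (qgh (g ω, h ω))
        - ∑ ω, p ω * Real.logb 2 (qh (h ω)) := by
    rw [← sum_add_distrib, ← sum_sub_distrib]
    simp_rw [← mul_add, ← mul_sub]
    refine sum_mul_eq_of_pos hp0 fun ω hω => ?_
    rw [Real.logb_div (mul_pos (distOf_apply_pos hp0 _ hω) (distOf_apply_pos hp0 _ hω)).ne'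
      (distOf_apply_pos hp0 h hω).ne',
      Real.logb_mul (distOf_apply_pos hp0 _ hω).ne' (distOf_apply_pos hp0 _ hω).ne']
  have hgibbs := Hrv_le_neg_sum_mul_logb hp0 hp1 _ hr0 hr1 hpos
  rw [hcross] at hgibbs
  rw [Hrv_eq_neg_sum h, Hrv_eq_neg_sum (fun ω => (f ω, h ω)), Hrv_eq_neg_sum fun ω => (g ω, h ω)]
  linarith

noncomputable def condEnt (p : Ω → ℝ) (f : Ω → A) (z : Ω → B) : ℝ :=
  Hrv p (fun ω => (f ω, z ω)) - Hrv p z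

lemma condEnt_le_condEnt_of_factors (hp0 : ∀ ω, 0 ≤ p ω) (hp1 : ∑ ω, p ω = 1) (f : Ω → A)
    {z : Ω → B} {z' : Ω → C} (hz : ∀ ω ω', z ω' = z ω → z' ω' = z' ω) :
    condEnt p f z ≤ condEnt p f z' := by
  have hfz : Hrv p (fun ω => (f ω, (z ω, z' ω))) = Hrv p (fun ω => (f ω, z ω)) :=
    Hrv_congr fun ω ω' => by
      simp only [Prod.ext_iff]
      exact ⟨fun h => ⟨h.1, h.2.1⟩, fun h => ⟨h.1, h.2, hz ω ω' h.2⟩⟩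
  have hz' : Hrv p (fun ω => (z ω, z' ω)) = Hrv p z :=
    Hrv_congr fun ω ω' => by
      simp only [Prod.ext_iff]
      exact ⟨fun h => h.1, fun h => ⟨h, hz ω ω' h⟩⟩
  have := Hrv_submodular hp0 hp1 f z z'
  rw [condEnt, condEnt]
  linarith

lemma condEnt_le_Hrv (hp0 : ∀ ω, 0 ≤ p ω) (hp1 : ∑ ω, p ω = 1) (f : Ω → A) (z : Ω → B) :
    condEnt p f z ≤ Hrv p f := by
  have hconst : condEnt p f (fun _ => ()) = Hrv p f := by
    rw [condEnt, Hrv_const hp1, sub_zero]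
    exact Hrv_congr fun ω ω' => by simp [Prod.ext_iff]
  exact hconst ▸ condEnt_le_condEnt_of_factors hp0 hp1 f fun _ _ _ => rfl

noncomputable def condMutInfo (p : Ω → ℝ) (f : Ω → A) (g : Ω → B) (z : Ω → C) : ℝ :=
  condEnt p f z - condEnt p f (fun ω => (z ω, g ω))

lemma condMutInfo_nonneg (hp0 : ∀ ω, 0 ≤ p ω) (hp1 : ∑ ω, p ω = 1)
    (f : Ω → A) (g : Ω → B) (z : Ω → C) : 0 ≤ condMutInfo p f g z :=
  sub_nonneg.2 <| condEnt_le_condEnt_of_factors hp0 hp1 f fun _ _ h => (Prod.ext_iff.1 h).1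

lemma condMutInfo_le_condMutInfo_of_factors (hp0 : ∀ ω, 0 ≤ p ω) (hp1 : ∑ ω, p ω = 1)
    (f : Ω → A) (g : Ω → B) {z : Ω → C} {z' : Ω → T}
    (hz : ∀ ω ω', z ω' = z ω → z' ω' = z' ω) (hindep : condEnt p f z = Hrv p f) :
    condMutInfo p f g z' ≤ condMutInfo p f g z := by
  have h₁ := condEnt_le_Hrv hp0 hp1 f z'
  have h₂ : condEnt p f (fun ω => (z ω, g ω)) ≤ condEnt p f (fun ω => (z' ω, g ω)) :=
    condEnt_le_condEnt_of_factors hp0 hp1 f fun ω ω' h => by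
      simp only [Prod.ext_iff] at h ⊢
      exact ⟨hz ω ω' h.1, h.2⟩
  rw [condMutInfo, condMutInfo]
  linarith

lemma mutInfo_congr_left {f : Ω → A} {f' : Ω → C} (h : ∀ ω ω', f ω' = f ω ↔ f' ω' = f' ω)
    (g : Ω → B) : mutInfo p f g = mutInfo p f' g := by
  have hpair : Hrv p (fun ω => (f ω, g ω)) = Hrv p (fun ω => (f' ω, g ω)) :=
    Hrv_congr fun ω ω' => by simp only [Prod.ext_iff, h]
  rw [mutInfo, mutInfo, Hrv_congr h, hpair]

lemma mutInfo_of_subsingleton [Subsingleton A] (hp1 : ∑ ω, p ω = 1) (f : Ω → A) (g : Ω → B) :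
    mutInfo p f g = 0 := by
  rw [mutInfo_congr_left (f' := fun _ => ()) fun _ _ => iff_of_true (Subsingleton.elim _ _) rfl,
    mutInfo, Hrv_const hp1, Hrv_congr (f := fun ω => ((), g ω)) (g := g) fun ω ω' => by simp]
  ring

end Entropy

section Joint

variable {Ω ι : Type} {α : ι → Type}

/-- The joint random variable `U_T = (U_j)_{j ∈ T}`. -/
def jointOn (U : ∀ i, Ω → α i) (T : Finset ι) (ω : Ω) : ∀ j : T, α j :=
  fun j => U j ω

lemma jointOn_eq_jointOn_iff {U : ∀ i, Ω → α i} {T : Finset ι} {ω ω' : Ω} :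
    jointOn U T ω' = jointOn U T ω ↔ ∀ j ∈ T, U j ω' = U j ω := by
  simp [jointOn, funext_iff]

lemma jointOn_univ_eq_jointOn_univ_iff [Fintype ι] {U : ∀ i, Ω → α i} {ω ω' : Ω} :
    jointOn U univ ω' = jointOn U univ ω ↔ (fun i => U i ω') = fun i => U i ω := by
  rw [jointOn_eq_jointOn_iff, funext_iff]
  simp

variable [Fintype Ω] {p : Ω → ℝ} [∀ i, Fintype (α i)] [∀ i, DecidableEq (α i)]
  {B : Type} [Fintype B] [DecidableEq B] [DecidableEq ι]

lemma Hrv_jointOn_insert (U : ∀ i, Ω → α i) (a : ι) (T : Finset ι) :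
    Hrv p (jointOn U (insert a T)) = Hrv p (jointOn U T) + condEnt p (U a) (jointOn U T) := by
  rw [condEnt, add_sub_cancel]
  exact Hrv_congr fun ω ω' => by simp [Prod.ext_iff, jointOn_eq_jointOn_iff]

lemma Hrv_jointOn_insert_pair (U : ∀ i, Ω → α i) (V : Ω → B) (a : ι) (T : Finset ι) :
    Hrv p (fun ω => (jointOn U (insert a T) ω, V ω))
      = Hrv p (fun ω => (jointOn U T ω, V ω))
        + condEnt p (U a) (fun ω => (jointOn U T ω, V ω)) := by
  rw [condEnt, add_sub_cancel]
  exact Hrv_congr fun ω ω' => by simp [Prod.ext_iff, jointOn_eq_jointOn_iff, and_assoc]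

lemma mutInfo_jointOn_insert (U : ∀ i, Ω → α i) (V : Ω → B) (a : ι) (T : Finset ι) :
    mutInfo p (jointOn U (insert a T)) V
      = mutInfo p (jointOn U T) V + condMutInfo p (U a) V (jointOn U T) := by
  rw [mutInfo, mutInfo, condMutInfo, Hrv_jointOn_insert, Hrv_jointOn_insert_pair]
  ring

lemma Hrv_pi_eq_sum_of_indep [Fintype ι] (hp0 : ∀ ω, 0 ≤ p ω)
    (U : ∀ i, Ω → α i)
    (hind : ∀ u : ∀ i, α i, distOf p (fun ω i => U i ω) u = ∏ i, distOf p (U i) (u i)) :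
    Hrv p (fun ω i => U i ω) = ∑ i, Hrv p (U i) := by
  simp only [Hrv_eq_neg_sum, hind]
  rw [sum_neg_distrib, neg_inj, sum_comm]
  simp_rw [← mul_sum]
  exact sum_mul_eq_of_pos hp0 fun ω hω =>
    Real.logb_prod _ _ fun i _ => (distOf_apply_pos hp0 (U i) hω).ne'

end Joint

section Chain

variable {Ω ι : Type} [Fintype Ω] {p : Ω → ℝ} [LinearOrder ι] {α : ι → Type}
  [∀ i, Fintype (α i)] [∀ i, DecidableEq (α i)] {B : Type} [Fintype B] [DecidableEq B]

lemma mutInfo_jointOn_eq_sum_condMutInfo (hp1 : ∑ ω, p ω = 1) (U : ∀ i, Ω → α i) (V : Ω → B)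
    (S : Finset ι) :
    mutInfo p (jointOn U S) V = ∑ i ∈ S, condMutInfo p (U i) V (jointOn U (S.filter (· < i))) := by
  have htel := Finset.sum_insert_filter_lt_sub (fun T => mutInfo p (jointOn U T) V) S
  simp only [mutInfo_jointOn_insert, add_sub_cancel_left] at htel
  rw [htel, mutInfo_of_subsingleton hp1 (jointOn U ∅), sub_zero]

variable [Fintype ι]

/-- Under independence the increments `H(U_i | U_{<i})` of the chain rule for `H(U)` are bounded
by `H(U_i)` and add up to `∑ H(U_i)`, so each of them equals `H(U_i)`. -/
lemma condEnt_jointOn_filter_lt_eq_Hrv (hp0 : ∀ ω, 0 ≤ p ω) (hp1 : ∑ ω, p ω = 1)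
    (U : ∀ i, Ω → α i) (hadd : Hrv p (fun ω i => U i ω) = ∑ i, Hrv p (U i)) (i : ι) :
    condEnt p (U i) (jointOn U (univ.filter (· < i))) = Hrv p (U i) := by
  have hchain : ∑ j, condEnt p (U j) (jointOn U (univ.filter (· < j)))
      = Hrv p (fun ω i => U i ω) := by
    have htel := Finset.sum_insert_filter_lt_sub (fun T => Hrv p (jointOn U T)) univ
    simp only [Hrv_jointOn_insert, add_sub_cancel_left] at htel
    rw [htel, Hrv_of_subsingleton hp1 (jointOn U ∅), sub_zero]
    exact Hrv_congr fun _ _ => jointOn_univ_eq_jointOn_univ_iff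
  have hslack : ∑ j, (Hrv p (U j) - condEnt p (U j) (jointOn U (univ.filter (· < j)))) = 0 := by
    rw [sum_sub_distrib, hchain, hadd, sub_self]
  have := (sum_eq_zero_iff_of_nonneg fun j _ => sub_nonneg.2 (condEnt_le_Hrv hp0 hp1 _ _)).1
    hslack i (mem_univ i)
  linarith

lemma mutInfo_jointOn_le_sum_condMutInfo (hp0 : ∀ ω, 0 ≤ p ω) (hp1 : ∑ ω, p ω = 1)
    (U : ∀ i, Ω → α i) (V : Ω → B) (hadd : Hrv p (fun ω i => U i ω) = ∑ i, Hrv p (U i))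
    (S : Finset ι) :
    mutInfo p (jointOn U S) V
      ≤ ∑ i ∈ S, condMutInfo p (U i) V (jointOn U (univ.filter (· < i))) := by
  rw [mutInfo_jointOn_eq_sum_condMutInfo hp1]
  refine sum_le_sum fun i _ => condMutInfo_le_condMutInfo_of_factors hp0 hp1 _ _ ?_
    (condEnt_jointOn_filter_lt_eq_Hrv hp0 hp1 U hadd i)
  intro ω ω' h
  rw [jointOn_eq_jointOn_iff] at h ⊢
  exact fun j hj => h j (by simp_all)

end Chain

theorem shearer_mutual_information_general {m : ℕ} {Ω : Type} [Fintype Ω]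
    (α : Fin m → Type) [∀ i, Fintype (α i)] [∀ i, DecidableEq (α i)]
    {β : Type} [Fintype β] [DecidableEq β]
    (p : Ω → ℝ) (hp0 : ∀ ω, 0 ≤ p ω) (hp1 : ∑ ω, p ω = 1)
    (U : ∀ i, Ω → α i) (V : Ω → β)
    (hind : ∀ u : ∀ i, α i,
      distOf p (fun ω => (fun i => U i ω)) u = ∏ i, distOf p (U i) (u i))
    (k : ℝ)
    (ν : Finset (Fin m) → ℝ) (hν0 : ∀ S, 0 ≤ ν S)
    (hνk : ∀ i : Fin m, ∑ S ∈ Finset.univ.filter (fun S => i ∈ S), ν S ≤ 1 / k) :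
    ∑ S, ν S * mutInfo p (fun ω => (fun i : {i : Fin m // i ∈ S} => U i ω)) V
      ≤ mutInfo p (fun ω => (fun i => U i ω)) V / k := by
  set A : Fin m → ℝ := fun i => condMutInfo p (U i) V (jointOn U (univ.filter (· < i)))
  have hadd := Hrv_pi_eq_sum_of_indep hp0 U hind
  have hfull : mutInfo p (fun ω i => U i ω) V = ∑ i, A i := by
    rw [← mutInfo_congr_left (fun _ _ => jointOn_univ_eq_jointOn_univ_iff) V,
      mutInfo_jointOn_eq_sum_condMutInfo hp1]
  calc ∑ S, ν S * mutInfo p (jointOn U S) V ≤ ∑ S, ν S * ∑ i ∈ S, A i :=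
        sum_le_sum fun S _ =>
          mul_le_mul_of_nonneg_left (mutInfo_jointOn_le_sum_condMutInfo hp0 hp1 U V hadd S) (hν0 S)
    _ = ∑ i, (∑ S ∈ univ.filter (fun S => i ∈ S), ν S) * A i := by
        simp_rw [mul_sum, sum_mul]
        exact sum_comm' (by simp)
    _ ≤ ∑ i, 1 / k * A i :=
        sum_le_sum fun i _ => mul_le_mul_of_nonneg_right (hνk i) (condMutInfo_nonneg hp0 hp1 _ _ _)
    _ = mutInfo p (fun ω i => U i ω) V / k := by rw [hfull, ← mul_sum, one_div_mul_eq_div]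

/-- Shearer-type inequality for mutual information: if `U_1, …, U_m` are mutually
independent and `ν` is a distribution on subsets `S ⊆ [m]` with `Σ_{S ∋ i} ν(S) ≤ 1/k`
for every `i`, then `Σ_S ν(S)·I(U_S : V) ≤ I(U : V)/k`. -/
theorem shearer_mutual_information {m : ℕ} {Ω : Type} [Fintype Ω]
    (α : Fin m → Type) [∀ i, Fintype (α i)] [∀ i, DecidableEq (α i)]
    {β : Type} [Fintype β] [DecidableEq β]
    (p : Ω → ℝ) (hp0 : ∀ ω, 0 ≤ p ω) (hp1 : ∑ ω, p ω = 1)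
    (U : ∀ i, Ω → α i) (V : Ω → β)
    (hind : ∀ u : ∀ i, α i,
      distOf p (fun ω => (fun i => U i ω)) u = ∏ i, distOf p (U i) (u i))
    (k : ℝ) (hk : 0 < k)
    (ν : Finset (Fin m) → ℝ) (hν0 : ∀ S, 0 ≤ ν S) (hν1 : ∑ S, ν S = 1)
    (hνk : ∀ i : Fin m, ∑ S ∈ Finset.univ.filter (fun S => i ∈ S), ν S ≤ 1 / k) :
    ∑ S, ν S * mutInfo p (fun ω => (fun i : {i : Fin m // i ∈ S} => U i ω)) V
      ≤ mutInfo p (fun ω => (fun i => U i ω)) V / k :=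
  shearer_mutual_information_general α p hp0 hp1 U V hind k ν hν0 hνk
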